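/- arXiv:2210.16882 — 2 statements merged into one kernel-verified Lean document; each statement's English description precedes it below -/
import Mathlib

section
/- Let d ∈ ℕ and let f : ℝ^d × ℝ → ℝ^d be continuously differentiable and satisfy the geometry compatibility (incompressibility) condition Σ_{i=1}^d ∂_{x_i} f_i(x,λ) = 0 for all (x,λ) ∈ ℝ^d × ℝ. Let u : ℝ^d → ℝ be continuously differentiable and define the vector field X : ℝ^d → ℝ^d by X(x) := ∫₀^{u(x)} f(x,λ) dλ (a signed integral). Then X is differentiable and its divergence satisfies div X(x) = ⟨ f(x,u(x)), ∇u(x) ⟩ for every x ∈ ℝ^d, where ⟨·,·⟩ is the Euclidean inner product. -/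
/-!
Write `X = Φ ∘ (id, u)` with `Φ (x, t) = ∫₀ᵗ f (x, λ) dλ`. Differentiation under the integral sign
and the fundamental theorem of calculus give `Φ` the continuous partial derivatives
`∂ₓΦ = ∫₀ᵗ ∂ₓf` and `∂ₜΦ = f`, so by the chain rule
`DX(x) v = ∫₀^{u x} ∂ₓf (x, λ) v dλ + Du(x) v • f (x, u x)`.
The divergence is the trace of the Jacobian and the trace commutes with the integral, so the first
term contributes `∫₀^{u x} div f = 0`, while the rank-one second term has trace
`Du(x) (f (x, u x)) = ⟪f (x, u x), ∇u x⟫`.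
-/

open MeasureTheory RealInnerProductSpace

/-- The (Euclidean) divergence of a vector field `V : ℝ^d → ℝ^d`. -/
noncomputable def vdiv {d : ℕ} (V : EuclideanSpace ℝ (Fin d) → EuclideanSpace ℝ (Fin d))
    (x : EuclideanSpace ℝ (Fin d)) : ℝ :=
  ∑ i : Fin d, fderiv ℝ V x (EuclideanSpace.single i (1 : ℝ)) i

section ParametricPrimitive

variable {E G : Type*} [NormedAddCommGroup E] [NormedSpace ℝ E] [NormedAddCommGroup G]
  [NormedSpace ℝ G] {f : E → ℝ → G} {f₁ : E → ℝ → E →L[ℝ] G}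

theorem hasFDerivAt_intervalIntegral_of_continuous_partial [LocallyCompactSpace E]
    (hf : Continuous ↿f) (hf₁ : Continuous ↿f₁) (hdf : ∀ x t, HasFDerivAt (f · t) (f₁ x t) x)
    (a b : ℝ) (x₀ : E) :
    HasFDerivAt (fun x => ∫ t in a..b, f x t) (∫ t in a..b, f₁ x₀ t) x₀ := by
  obtain ⟨K, hK, hKx₀⟩ := exists_compact_mem_nhds x₀
  obtain ⟨C, hC⟩ := (hK.prod isCompact_uIcc).exists_bound_of_continuousOn hf₁.continuousOn
  refine intervalIntegral.hasFDerivAt_integral_of_dominated_of_fderiv_le (bound := fun _ => C)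
    hKx₀ (.of_forall fun x => (hf.comp (.prodMk_right x)).aestronglyMeasurable)
    ((hf.comp (.prodMk_right x₀)).intervalIntegrable a b)
    (hf₁.comp (.prodMk_right x₀)).aestronglyMeasurable ?_ intervalIntegrable_const
    (.of_forall fun t _ x _ => hdf x t)
  filter_upwards with t ht x hx
  exact hC (x, t) ⟨hx, Set.uIoc_subset_uIcc ht⟩

theorem hasStrictFDerivAt_parametric_primitive [LocallyCompactSpace E] [CompleteSpace G]
    (hf : Continuous ↿f) (hf₁ : Continuous ↿f₁) (hdf : ∀ x t, HasFDerivAt (f · t) (f₁ x t) x)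
    (a : ℝ) (p : E × ℝ) :
    HasStrictFDerivAt (fun q : E × ℝ => ∫ t in a..q.2, f q.1 t)
      ((∫ t in a..p.2, f₁ p.1 t).coprod (.toSpanSingleton ℝ (f p.1 p.2))) p := by
  refine hasStrictFDerivAt_uncurry_coprod (f := fun x b => ∫ t in a..b, f x t)
    (f₁ := fun x b => ∫ t in a..b, f₁ x t) (f₂ := fun x b => .toSpanSingleton ℝ (f x b))
    (.of_forall fun q => hasFDerivAt_intervalIntegral_of_continuous_partial hf hf₁ hdf a q.2 q.1)
    (.of_forall fun q => ?_) ?_ ?_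
  · exact ((hf.comp (.prodMk_right q.1)).integral_hasStrictDerivAt a q.2).hasDerivAt.hasFDerivAt
  · exact (intervalIntegral.continuous_parametric_primitive_of_continuous (μ := volume)
      hf₁).continuousAt
  · exact ((ContinuousLinearMap.toSpanSingletonCLE (𝕜 := ℝ) (E := G)).continuous.comp
      hf).continuousAt

end ParametricPrimitive

section Leibniz

variable {E G : Type*} [NormedAddCommGroup E] [NormedSpace ℝ E] [LocallyCompactSpace E]
  [NormedAddCommGroup G] [NormedSpace ℝ G] [CompleteSpace G]

theorem ContDiff.hasFDerivAt_intervalIntegral_comp {f : E × ℝ → G} (hf : ContDiff ℝ 1 f)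
    {u : E → ℝ} {u' : E →L[ℝ] ℝ} {x : E} (hu : HasFDerivAt u u' x) (a : ℝ) :
    HasFDerivAt (fun y => ∫ t in a..u y, f (y, t))
      ((∫ t in a..u x, fderiv ℝ f (x, t) ∘L .inl ℝ E ℝ)
        + (ContinuousLinearMap.toSpanSingleton ℝ (f (x, u x))).comp u') x := by
  have hpartial : ∀ y t, HasFDerivAt (fun y => f (y, t)) (fderiv ℝ f (y, t) ∘L .inl ℝ E ℝ) y :=
    fun y t => (hf.differentiable one_ne_zero (y, t)).hasFDerivAt.comp y
      (hasFDerivAt_prodMk_left y t)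
  have hΦ := hasStrictFDerivAt_parametric_primitive (f := fun y t => f (y, t)) hf.continuous
    ((hf.continuous_fderiv one_ne_zero).clm_comp continuous_const) hpartial a (x, u x)
  refine (hΦ.hasFDerivAt.comp x ((hasFDerivAt_id x).prodMk hu)).congr_fderiv ?_
  ext v
  simp

end Leibniz

section Trace

variable {E : Type*} [NormedAddCommGroup E] [NormedSpace ℝ E] [FiniteDimensional ℝ E]

variable (E) in
noncomputable def traceCLM : (E →L[ℝ] E) →L[ℝ] ℝ :=
  (LinearMap.trace ℝ E ∘ₗ ContinuousLinearMap.coeLM ℝ).toContinuousLinearMap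

@[simp]
theorem traceCLM_apply (L : E →L[ℝ] E) : traceCLM E L = LinearMap.trace ℝ E L := rfl

theorem traceCLM_toSpanSingleton_comp (w : E) (ℓ : E →L[ℝ] ℝ) :
    traceCLM E ((ContinuousLinearMap.toSpanSingleton ℝ w).comp ℓ) = ℓ w :=
  LinearMap.trace_smulRight (ℓ : E →ₗ[ℝ] ℝ) w

theorem trace_fderiv_intervalIntegral_comp {f : E × ℝ → E} (hf : ContDiff ℝ 1 f)
    (hdiv : ∀ x t, LinearMap.trace ℝ E (fderiv ℝ (fun y => f (y, t)) x) = 0)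
    {u : E → ℝ} {x : E} (hu : DifferentiableAt ℝ u x) (a : ℝ) :
    LinearMap.trace ℝ E (fderiv ℝ (fun y => ∫ t in a..u y, f (y, t)) x) =
      fderiv ℝ u x (f (x, u x)) := by
  have hpartial : ∀ t, fderiv ℝ (fun y => f (y, t)) x = fderiv ℝ f (x, t) ∘L .inl ℝ E ℝ :=
    fun t => ((hf.differentiable one_ne_zero (x, t)).hasFDerivAt.comp x
      (hasFDerivAt_prodMk_left x t)).fderiv
  have hint : IntervalIntegrable (fun t => fderiv ℝ f (x, t) ∘L .inl ℝ E ℝ) volume a (u x) :=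
    (((hf.continuous_fderiv one_ne_zero).comp (.prodMk_right x)).clm_comp
      continuous_const).intervalIntegrable _ _
  rw [(hf.hasFDerivAt_intervalIntegral_comp hu.hasFDerivAt a).fderiv, ← traceCLM_apply, map_add,
    traceCLM_toSpanSingleton_comp, ← (traceCLM E).intervalIntegral_comp_comm hint]
  simp [← hpartial, hdiv]

end Trace

theorem vdiv_eq_trace {d : ℕ} (V : EuclideanSpace ℝ (Fin d) → EuclideanSpace ℝ (Fin d))
    (x : EuclideanSpace ℝ (Fin d)) :
    vdiv V x = LinearMap.trace ℝ (EuclideanSpace ℝ (Fin d)) (fderiv ℝ V x) := by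
  rw [LinearMap.trace_eq_sum_inner _ (EuclideanSpace.basisFun (Fin d) ℝ), vdiv]
  simp [EuclideanSpace.inner_single_left]

/-- If `f : ℝ^d × ℝ → ℝ^d` is `C¹` and divergence-free in `x` for every fixed `λ`
(geometry compatibility), and `u : ℝ^d → ℝ` is `C¹`, then the vector field
`X(x) = ∫₀^{u(x)} f(x,λ) dλ` is differentiable with `div X(x) = ⟨f(x,u(x)), ∇u(x)⟩`. -/
theorem div_of_integrated_flux
    (d : ℕ)
    (f : EuclideanSpace ℝ (Fin d) × ℝ → EuclideanSpace ℝ (Fin d))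
    (hf : ContDiff ℝ 1 f)
    (hdiv : ∀ (x : EuclideanSpace ℝ (Fin d)) (lam : ℝ),
      vdiv (fun y => f (y, lam)) x = 0)
    (u : EuclideanSpace ℝ (Fin d) → ℝ) (hu : ContDiff ℝ 1 u)
    (X : EuclideanSpace ℝ (Fin d) → EuclideanSpace ℝ (Fin d))
    (hX : ∀ x, X x = ∫ lam in (0:ℝ)..(u x), f (x, lam)) :
    ∀ x, DifferentiableAt ℝ X x ∧ vdiv X x = ⟪f (x, u x), gradient u x⟫ := by
  intro x
  obtain rfl : X = fun y => ∫ lam in (0:ℝ)..(u y), f (y, lam) := funext hX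
  have hux := hu.differentiable one_ne_zero x
  refine ⟨(hf.hasFDerivAt_intervalIntegral_comp hux.hasFDerivAt 0).differentiableAt, ?_⟩
  rw [vdiv_eq_trace, trace_fderiv_intervalIntegral_comp hf (by simpa [vdiv_eq_trace] using hdiv)
    hux, real_inner_comm, ← InnerProductSpace.toDual_apply_apply, toDual_gradient]
end

section
/- (Sign-function representation.) Let (X,Σ,μ) be a σ-finite measure space and let h : X × ℝ → ℝ be (Σ ⊗ Borel)-measurable. Define s : ℝ → ℝ by s(λ) = 1 for λ < 0 and s(λ) = −1 for λ ≥ 0. Assume that for μ-almost every x ∈ X: (i) |h(x,λ)| = 1 for Lebesgue-almost every λ; (ii) λ ↦ h(x,λ) is almost-everywhere nonincreasing, i.e., h(x,λ₁) ≥ h(x,λ₂) for Lebesgue-almost every pair λ₁ < λ₂; and (iii) λ ↦ h(x,λ) − s(λ) is Lebesgue integrable on ℝ. Then the function u : X → ℝ given by u(x) := (1/2) ∫_ℝ ( h(x,λ) − s(λ) ) dλ is measurable, and h(x,λ) = sgn( u(x) − λ ) for (μ ⊗ Lebesgue)-almost every (x,λ) ∈ X × ℝ, where sgn(r) = 1 for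 r > 0 and sgn(r) = −1 for r < 0 (the value at r = 0 being immaterial on a null set). -/
/-!
For the set `A = {λ | 0 < h(x, λ)}`, monotonicity says that `A ∩ (a, ∞)` is null for a.e. `a`
outside `A`. Hence `A` agrees a.e. with the half-line `(-∞, c)`, where `c` is the infimum of the
`t` with `A ∩ (t, ∞)` null; integrability of `h(x, ·) - s` rules out `A` being null or conull, so
`c` is finite. Then `h(x, ·) = sgn (c - ·)` a.e., and integrating `sgn (c - ·) - sgn (0 - ·)`
gives `2c`, i.e. `c = u(x)`. Fubini makes both `u` and the exceptional set measurable.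
-/

open MeasureTheory Set

/-- `stepSign 0` is the function `s` of the statement, and `stepSign c t = sgn (c - t)` for
`t ≠ c`. -/
noncomputable def stepSign (c t : ℝ) : ℝ := if t < c then 1 else -1

theorem Measurable.stepSign {α : Type*} [MeasurableSpace α] {f g : α → ℝ} (hf : Measurable f)
    (hg : Measurable g) : Measurable fun a => stepSign (f a) (g a) :=
  Measurable.ite (measurableSet_lt hg hf) measurable_const measurable_const

lemma stepSign_sub_stepSign_of_le {a b : ℝ} (hab : b ≤ a) :
    (fun t => stepSign a t - stepSign b t) = (Ico b a).indicator fun _ => 2 := by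
  funext t
  by_cases hta : t < a <;> by_cases htb : t < b <;>
    simp [stepSign, indicator, hta, htb] <;> norm_num <;> linarith

lemma integral_stepSign_sub_stepSign (a b : ℝ) :
    ∫ t, (stepSign a t - stepSign b t) = 2 * (a - b) := by
  wlog hab : b ≤ a generalizing a b
  · calc ∫ t, (stepSign a t - stepSign b t)
        = -∫ t, (stepSign b t - stepSign a t) := by rw [← integral_neg]; simp_rw [neg_sub]
      _ = 2 * (a - b) := by rw [this b a (le_of_not_ge hab)]; ring
  rw [stepSign_sub_stepSign_of_le hab, integral_indicator_const _ measurableSet_Ico,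
    Real.volume_real_Ico_of_le hab, smul_eq_mul]
  ring

section ThresholdSet

variable {A : Set ℝ}

lemma measure_inter_Ioi_sInf_eq_zero {μ : Measure ℝ}
    (hne : {t | μ (A ∩ Ioi t) = 0}.Nonempty) (hbdd : BddBelow {t | μ (A ∩ Ioi t) = 0}) :
    μ (A ∩ Ioi (sInf {t | μ (A ∩ Ioi t) = 0})) = 0 := by
  set S := {t | μ (A ∩ Ioi t) = 0}
  have hS_gt {q : ℝ} (hq : sInf S < q) : q ∈ S := by
    obtain ⟨t, htS, htq⟩ := (csInf_lt_iff hbdd hne).1 hq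
    exact measure_mono_null (inter_subset_inter_right _ (Ioi_subset_Ioi htq.le)) htS
  refine measure_mono_null (fun x ⟨hxA, hcx⟩ => ?_)
    (measure_iUnion_null fun q : ℚ => measure_iUnion_null fun (hq : sInf S < q) => hS_gt hq)
  obtain ⟨q, hcq, hqx⟩ := exists_rat_btwn (mem_Ioi.1 hcx)
  exact mem_iUnion₂.2 ⟨q, hcq, hxA, hqx⟩

lemma ae_volume_inter_Ioi_eq_zero_of_notMem (hA : MeasurableSet A)
    (hmono : volume ((Aᶜ ×ˢ A) ∩ {p : ℝ × ℝ | p.1 < p.2}) = 0) :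
    ∀ᵐ a, a ∉ A → volume (A ∩ Ioi a) = 0 := by
  have hslices := (Measure.measure_prod_null
    ((hA.compl.prod hA).inter (measurableSet_lt measurable_fst measurable_snd))).1 hmono
  filter_upwards [hslices] with a ha haA
  have hslice : Prod.mk a ⁻¹' ((Aᶜ ×ˢ A) ∩ {p : ℝ × ℝ | p.1 < p.2}) = A ∩ Ioi a := by
    ext b
    simp [haA, and_comm]
  rwa [hslice] at ha

lemma exists_ae_eq_Iio (hA : MeasurableSet A)
    (hmono : volume ((Aᶜ ×ˢ A) ∩ {p : ℝ × ℝ | p.1 < p.2}) = 0)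
    (hpos : volume (A ∩ Ioi 0) ≠ ⊤) (hneg : volume (Aᶜ ∩ Iio 0) ≠ ⊤) :
    ∃ c, A =ᵐ[volume] Iio c := by
  set S := {t : ℝ | volume (A ∩ Ioi t) = 0}
  have hslice := ae_volume_inter_Ioi_eq_zero_of_notMem hA hmono
  have hS_mono {t t' : ℝ} (ht : t ∈ S) (htt' : t ≤ t') : t' ∈ S :=
    measure_mono_null (inter_subset_inter_right _ (Ioi_subset_Ioi htt')) ht
  have hS_ne : S.Nonempty := by
    by_contra hS
    have hAc : volume Aᶜ = 0 :=
      measure_eq_zero_iff_ae_notMem.2 (hslice.mono fun a ha haA => hS ⟨a, ha haA⟩)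
    apply hpos
    rw [inter_comm, measure_inter_conull hAc, Real.volume_Ioi]
  have hS_bdd : BddBelow S := by
    by_contra hS
    have hS_univ (t : ℝ) : t ∈ S := by
      obtain ⟨y, hyS, hyt⟩ := not_bddBelow_iff.1 hS t
      exact hS_mono hyS hyt.le
    have hA0 : volume A = 0 := by
      refine measure_mono_null (fun x hx => ?_) (measure_iUnion_null fun n : ℕ => hS_univ (-n))
      obtain ⟨n, hn⟩ := exists_nat_gt (-x)
      exact mem_iUnion.2 ⟨n, hx, neg_lt.1 hn⟩
    apply hneg
    rw [inter_comm, measure_inter_conull (by rwa [compl_compl]), Real.volume_Iio]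
  set c := sInf S
  have hAbove : volume (A ∩ Ioi c) = 0 := measure_inter_Ioi_sInf_eq_zero hS_ne hS_bdd
  have hBelow : volume (Aᶜ ∩ Iio c) = 0 :=
    measure_eq_zero_iff_ae_notMem.2 <| hslice.mono fun a ha ⟨haA, hac⟩ =>
      (csInf_le hS_bdd (ha haA)).not_gt hac
  refine ⟨c, ae_eq_set.2 ⟨?_, ?_⟩⟩
  · rw [sdiff_eq, compl_Iio, ← hAbove]
    exact measure_congr ((ae_eq_refl A).inter Ioi_ae_eq_Ici.symm)
  · rwa [sdiff_eq, inter_comm]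

end ThresholdSet

section AntitoneSign

variable {g : ℝ → ℝ}

lemma exists_ae_eq_stepSign (hg : Measurable g) (habs : ∀ᵐ t, |g t| = 1)
    (hanti : ∀ᵐ p : ℝ × ℝ, p.1 < p.2 → g p.2 ≤ g p.1)
    (hint : Integrable fun t => g t - stepSign 0 t) :
    ∃ c, g =ᵐ[volume] stepSign c := by
  set A := {t | 0 < g t}
  have hA : MeasurableSet A := measurableSet_lt measurable_const hg
  have hmono : volume ((Aᶜ ×ˢ A) ∩ {p : ℝ × ℝ | p.1 < p.2}) = 0 := by
    refine measure_mono_null ?_ (ae_iff.1 hanti)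
    rintro p ⟨⟨ha, hb⟩, hlt⟩ hp
    exact ha (lt_of_lt_of_le hb (hp hlt))
  have hfar := (hint.measure_norm_ge_lt_top one_pos).ne
  have hpos : volume (A ∩ Ioi 0) ≠ ⊤ := by
    refine ne_top_of_le_ne_top hfar (measure_mono fun t ⟨(ht : 0 < g t), ht0⟩ => ?_)
    show 1 ≤ ‖g t - stepSign 0 t‖
    rw [stepSign, if_neg (mem_Ioi.1 ht0).not_gt, Real.norm_eq_abs]
    exact le_abs.2 (Or.inl (by linarith))
  have hneg : volume (Aᶜ ∩ Iio 0) ≠ ⊤ := by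
    refine ne_top_of_le_ne_top hfar (measure_mono fun t ⟨(ht : ¬0 < g t), ht0⟩ => ?_)
    show 1 ≤ ‖g t - stepSign 0 t‖
    rw [stepSign, if_pos (mem_Iio.1 ht0), Real.norm_eq_abs]
    exact le_abs.2 (Or.inr (by linarith [not_lt.1 ht]))
  obtain ⟨c, hc⟩ := exists_ae_eq_Iio hA hmono hpos hneg
  refine ⟨c, ?_⟩
  filter_upwards [habs, hc] with t ht htc
  have htc' : 0 < g t ↔ t < c := Iff.of_eq htc
  rcases (abs_eq zero_le_one).1 ht with h | h <;> simp [stepSign, ← htc', h]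

theorem ae_eq_stepSign_half_integral (hg : Measurable g) (habs : ∀ᵐ t, |g t| = 1)
    (hanti : ∀ᵐ p : ℝ × ℝ, p.1 < p.2 → g p.2 ≤ g p.1)
    (hint : Integrable fun t => g t - stepSign 0 t) :
    g =ᵐ[volume] stepSign ((1 / 2) * ∫ t, (g t - stepSign 0 t)) := by
  obtain ⟨c, hc⟩ := exists_ae_eq_stepSign hg habs hanti hint
  have hcg : ∫ t, (g t - stepSign 0 t) = 2 * c := by
    rw [integral_congr_ae (hc.mono fun t ht => by rw [ht]), integral_stepSign_sub_stepSign]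
    ring
  rwa [hcg, one_div, inv_mul_cancel_left₀ two_ne_zero]

end AntitoneSign

theorem sign_function_representation_general
    {X : Type*} [MeasurableSpace X] (μ : Measure X)
    (h : X → ℝ → ℝ) (hmeas : Measurable (Function.uncurry h))
    (s : ℝ → ℝ) (hs : ∀ lam : ℝ, s lam = if lam < 0 then 1 else -1)
    (hae : ∀ᵐ x ∂μ,
      (∀ᵐ lam ∂(volume : Measure ℝ), |h x lam| = 1) ∧
      (∀ᵐ p ∂(volume : Measure (ℝ × ℝ)), p.1 < p.2 → h x p.2 ≤ h x p.1) ∧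
      Integrable (fun lam => h x lam - s lam)) :
    Measurable (fun x => (1 / 2 : ℝ) * ∫ lam : ℝ, (h x lam - s lam)) ∧
    ∀ᵐ q ∂(μ.prod (volume : Measure ℝ)),
      h q.1 q.2 =
        if 0 < (1 / 2 : ℝ) * (∫ lam : ℝ, (h q.1 lam - s lam)) - q.2 then 1 else -1 := by
  obtain rfl : s = stepSign 0 := funext hs
  have hu : Measurable fun x => (1 / 2 : ℝ) * ∫ lam, (h x lam - stepSign 0 lam) := by
    have hf : Measurable fun q : X × ℝ => h q.1 q.2 - stepSign 0 q.2 :=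
      hmeas.sub (measurable_const.stepSign measurable_snd)
    exact measurable_const.mul hf.stronglyMeasurable.integral_prod_right'.measurable
  refine ⟨hu, ?_⟩
  have hsgn (c t : ℝ) : (if 0 < c - t then (1 : ℝ) else -1) = stepSign c t := by
    simp only [stepSign, sub_pos]
  simp_rw [hsgn]
  refine (Measure.ae_prod_iff_ae_ae ?_).2 ?_
  · exact measurableSet_eq_fun hmeas ((hu.comp measurable_fst).stepSign measurable_snd)
  filter_upwards [hae] with x ⟨habs, hanti, hint⟩
  exact ae_eq_stepSign_half_integral (hmeas.comp measurable_prodMk_left) habs hanti hint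

/-- Sign-function representation: if `h : X × ℝ → ℝ` takes a.e. values in `{-1,1}`, is a.e.
nonincreasing in the velocity variable `λ`, and `λ ↦ h(x,λ) - s(λ)` is integrable (where
`s(λ) = 1` for `λ < 0` and `s(λ) = -1` for `λ ≥ 0`), then
`u(x) := (1/2)∫_ℝ (h(x,λ) - s(λ)) dλ` is measurable and `h(x,λ) = sgn(u(x) - λ)`
almost everywhere. -/
theorem sign_function_representation
    {X : Type*} [MeasurableSpace X] (μ : Measure X) [SigmaFinite μ]
    (h : X → ℝ → ℝ) (hmeas : Measurable (Function.uncurry h))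
    (s : ℝ → ℝ) (hs : ∀ lam : ℝ, s lam = if lam < 0 then 1 else -1)
    (hae : ∀ᵐ x ∂μ,
      (∀ᵐ lam ∂(volume : Measure ℝ), |h x lam| = 1) ∧
      (∀ᵐ p ∂(volume : Measure (ℝ × ℝ)), p.1 < p.2 → h x p.2 ≤ h x p.1) ∧
      Integrable (fun lam => h x lam - s lam)) :
    Measurable (fun x => (1 / 2 : ℝ) * ∫ lam : ℝ, (h x lam - s lam)) ∧
    ∀ᵐ q ∂(μ.prod (volume : Measure ℝ)),
      h q.1 q.2 =
        if 0 < (1 / 2 : ℝ) * (∫ lam : ℝ, (h q.1 lam - s lam)) - q.2 then 1 else -1 :=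
  sign_function_representation_general μ h hmeas s hs hae
end
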